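/- arXiv:1703.06056 — 3 statements merged into one kernel-verified Lean document; each statement's English description precedes it below -/
import Mathlib

section
/- Let s > 0 and let K ⊂ ℝ^d be compact with ℋ^s(K) < +∞, where ℋ^s is the s-dimensional Hausdorff measure. Then the Riesz capacity of order s of K is zero: cap_s(K) = 0. -/
open MeasureTheory Filter
open scoped ENNReal NNReal

noncomputable section

/-- The Riesz kernel of order `s ≥ 0`: `|x|^{-s}` for `s > 0` and `(-log|x|)₊` for `s = 0`. -/
def rieszKernel (d : ℕ) (s : ℝ) (x : EuclideanSpace ℝ (Fin d)) : ℝ≥0∞ :=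
  if s = 0 then ENNReal.ofReal (max (-Real.log ‖x‖) 0)
  else (ENNReal.ofReal ‖x‖) ^ (-s)

/-- The Riesz energy of order `s` of a measure `μ`:
`I_s μ = ∬ |x−y|^{-s} μ(dy) μ(dx)` (logarithmic kernel if `s = 0`). -/
def rieszEnergy (d : ℕ) (s : ℝ) (μ : Measure (EuclideanSpace ℝ (Fin d))) : ℝ≥0∞ :=
  ∫⁻ x, ∫⁻ y, rieszKernel d s (x - y) ∂μ ∂μ

/-- The Riesz capacity of order `s` of a set `E`:
`cap_s(E) = [inf {I_s(μ) : μ Borel probability measure on E}]⁻¹`, with `1/∞ = 0`. -/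
def rieszCapacity (d : ℕ) (s : ℝ) (E : Set (EuclideanSpace ℝ (Fin d))) : ℝ≥0∞ :=
  (⨅ (μ : Measure (EuclideanSpace ℝ (Fin d))) (_ : IsProbabilityMeasure μ) (_ : μ Eᶜ = 0),
    rieszEnergy d s μ)⁻¹

/-!
If `μ` is carried by `K` and has finite `s`-energy, its `s`-potential is finite `μ`-a.e. At such
a point `x` there is no atom, so `μ (B(x,r)) ≤ r^s ∫_{B(x,r)} |x - y|^{-s} dμ(y) = o(r^s)`.
A set on which `μ (B(x,r)) ≤ ε r^s` for all small `r` has `μ`-measure at most `ε` times its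
`s`-dimensional Hausdorff measure: cover it by sets of small diameter, each contained in a ball
of that radius centred in the set. As `ℋ^s(K) < ∞` and `ε` is arbitrary, `μ = 0`; so no
probability measure on `K` has finite energy.
-/

open scoped Topology

def rieszPotential {X : Type*} [EDist X] [MeasurableSpace X] (μ : Measure X) (s : ℝ) (x : X) :
    ℝ≥0∞ :=
  ∫⁻ y, edist x y ^ (-s) ∂μ

section Potential

open Metric (closedBall ediam cthickening)

variable {X : Type*} [MetricSpace X] [MeasurableSpace X] [BorelSpace X] {μ : Measure X} {s : ℝ}

theorem measure_singleton_eq_zero_of_rieszPotential_ne_top (hs : 0 < s) {x : X}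
    (hx : rieszPotential μ s x ≠ ∞) : μ {x} = 0 := by
  by_contra hne
  refine hx (top_le_iff.mp ?_)
  calc ∞ = edist x x ^ (-s) * μ {x} := by
        rw [edist_self, ENNReal.zero_rpow_of_neg (neg_neg_iff_pos.mpr hs), ENNReal.top_mul hne]
    _ = ∫⁻ y in {x}, edist x y ^ (-s) ∂μ :=
        (lintegral_singleton (fun y => edist x y ^ (-s)) x).symm
    _ ≤ rieszPotential μ s x := setLIntegral_le_lintegral _ _

theorem measure_closedBall_le_rpow_mul_setLIntegral (hs : 0 ≤ s) (x : X) {r : ℝ} (hr : 0 < r) :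
    μ (closedBall x r) ≤
      ENNReal.ofReal r ^ s * ∫⁻ y in closedBall x r, edist x y ^ (-s) ∂μ := by
  have hr₀ : ENNReal.ofReal r ≠ 0 := (ENNReal.ofReal_pos.mpr hr).ne'
  have hr_top : ENNReal.ofReal r ≠ ∞ := ENNReal.ofReal_ne_top
  have hkernel : ENNReal.ofReal r ^ (-s) * μ (closedBall x r) ≤
      ∫⁻ y in closedBall x r, edist x y ^ (-s) ∂μ := by
    rw [← setLIntegral_const]
    refine setLIntegral_mono' Metric.isClosed_closedBall.measurableSet fun y hy => ?_
    rw [ENNReal.rpow_neg, ENNReal.rpow_neg]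
    gcongr
    rw [edist_dist, dist_comm]
    exact ENNReal.ofReal_le_ofReal (Metric.mem_closedBall.mp hy)
  calc μ (closedBall x r)
      = ENNReal.ofReal r ^ s * (ENNReal.ofReal r ^ (-s) * μ (closedBall x r)) := by
        rw [← mul_assoc, ← ENNReal.rpow_add _ _ hr₀ hr_top, add_neg_cancel, ENNReal.rpow_zero,
          one_mul]
    _ ≤ _ := by gcongr

theorem eventually_measure_closedBall_le_of_rieszPotential_ne_top (hs : 0 < s) {x : X}
    (hx : rieszPotential μ s x ≠ ∞) {ε : ℝ≥0∞} (hε : ε ≠ 0) :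
    ∀ᶠ r in 𝓝 0, μ (closedBall x r) ≤ ε * ENNReal.ofReal r ^ s := by
  set ν := μ.withDensity fun y => edist x y ^ (-s)
  have hν_ball (r : ℝ) : ν (closedBall x r) =
      ∫⁻ y in closedBall x r, edist x y ^ (-s) ∂μ :=
    withDensity_apply _ Metric.isClosed_closedBall.measurableSet
  have hν_atom : ν {x} = 0 := by
    rw [withDensity_apply _ (measurableSet_singleton x), lintegral_singleton,
      measure_singleton_eq_zero_of_rieszPotential_ne_top hs hx, mul_zero]
  have hν_tendsto : Tendsto (fun r => ν (cthickening r {x})) (𝓝 0) (𝓝 0) := by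
    refine hν_atom ▸
      tendsto_measure_cthickening_of_isClosed ⟨1, one_pos, ?_⟩ isClosed_singleton
    rw [Metric.cthickening_singleton x zero_le_one, hν_ball]
    exact ne_top_of_le_ne_top hx (setLIntegral_le_lintegral _ _)
  filter_upwards [hν_tendsto.eventually_le_const hε.bot_lt] with r hr
  rcases le_or_gt r 0 with hr₀ | hr₀
  · have hsub : closedBall x r ⊆ {x} := fun y hy =>
      dist_le_zero.mp ((Metric.mem_closedBall.mp hy).trans hr₀)
    rw [measure_mono_null hsub (measure_singleton_eq_zero_of_rieszPotential_ne_top hs hx)]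
    exact zero_le
  calc μ (closedBall x r)
      ≤ ENNReal.ofReal r ^ s * ν (closedBall x r) := by
        rw [hν_ball]; exact measure_closedBall_le_rpow_mul_setLIntegral hs.le x hr₀
    _ ≤ ENNReal.ofReal r ^ s * ε := by
        rw [← Metric.cthickening_singleton x hr₀.le]; gcongr
    _ = ε * ENNReal.ofReal r ^ s := mul_comm _ _

theorem measure_le_mul_hausdorffMeasure_of_measure_closedBall_le {S : Set X} {ε : ℝ≥0∞}
    (hε₀ : ε ≠ 0) (hε : ε ≠ ∞) {δ : ℝ} (hδ : 0 < δ)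
    (hS : ∀ x ∈ S, ∀ r ∈ Set.Icc 0 δ, μ (closedBall x r) ≤ ε * ENNReal.ofReal r ^ s) :
    μ S ≤ ε * μH[s] S := by
  have hcover (t : ℕ → Set X) (hSt : S ⊆ ⋃ n, t n)
      (ht : ∀ n, ediam (t n) ≤ ENNReal.ofReal δ) :
      μ S ≤ ε * ∑' n, ⨆ _ : (t n).Nonempty, ediam (t n) ^ s := by
    have hpiece (n : ℕ) : μ (S ∩ t n) ≤ ε * ⨆ _ : (t n).Nonempty, ediam (t n) ^ s := by
      rcases (S ∩ t n).eq_empty_or_nonempty with he | ⟨x, hxS, hxt⟩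
      · simp [he]
      have hdiam : ediam (t n) ≠ ∞ := ne_top_of_le_ne_top ENNReal.ofReal_ne_top (ht n)
      have hball : t n ⊆ closedBall x (ediam (t n)).toReal := fun y hy => by
        rw [Metric.mem_closedBall, dist_edist]
        exact ENNReal.toReal_mono hdiam (Metric.edist_le_ediam_of_mem hy hxt)
      calc μ (S ∩ t n) ≤ μ (closedBall x (ediam (t n)).toReal) :=
            measure_mono (Set.inter_subset_right.trans hball)
        _ ≤ ε * ENNReal.ofReal (ediam (t n)).toReal ^ s :=
            hS x hxS _ ⟨ENNReal.toReal_nonneg, ENNReal.toReal_le_of_le_ofReal hδ.le (ht n)⟩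
        _ = ε * ⨆ _ : (t n).Nonempty, ediam (t n) ^ s := by
            rw [ENNReal.ofReal_toReal hdiam, iSup_pos ⟨x, hxt⟩]
    calc μ S ≤ μ (⋃ n, S ∩ t n) := measure_mono fun x hx => by
          simpa [hx] using hSt hx
      _ ≤ ∑' n, μ (S ∩ t n) := measure_iUnion_le _
      _ ≤ ∑' n, ε * ⨆ _ : (t n).Nonempty, ediam (t n) ^ s := ENNReal.tsum_le_tsum hpiece
      _ = ε * ∑' n, ⨆ _ : (t n).Nonempty, ediam (t n) ^ s := ENNReal.tsum_mul_left
  calc μ S ≤ ε * ⨅ (t : ℕ → Set X) (_ : S ⊆ ⋃ n, t n)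
        (_ : ∀ n, ediam (t n) ≤ ENNReal.ofReal δ),
        ∑' n, ⨆ _ : (t n).Nonempty, ediam (t n) ^ s := by
        simp only [ENNReal.mul_iInf_of_ne hε₀ hε]
        exact le_iInf₂ fun t hSt => le_iInf (hcover t hSt)
    _ ≤ ε * μH[s] S := by
        rw [Measure.hausdorffMeasure_apply]
        gcongr
        exact le_iSup₂_of_le (ENNReal.ofReal δ) (ENNReal.ofReal_pos.mpr hδ) le_rfl

theorem measure_le_mul_hausdorffMeasure_of_eventually_measure_closedBall_le {S : Set X}
    {ε : ℝ≥0∞} (hε₀ : ε ≠ 0) (hε : ε ≠ ∞)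
    (hS : ∀ x ∈ S, ∀ᶠ r in 𝓝 0, μ (closedBall x r) ≤ ε * ENNReal.ofReal r ^ s) :
    μ S ≤ ε * μH[s] S := by
  set B : ℕ → Set X := fun n => {x ∈ S | ∀ r ∈ Set.Icc 0 (1 / ((n : ℝ) + 1)),
    μ (closedBall x r) ≤ ε * ENNReal.ofReal r ^ s}
  have hB_mono : Monotone B := fun m n hmn x hx =>
    ⟨hx.1, fun r hr => hx.2 r ⟨hr.1, hr.2.trans (Nat.one_div_le_one_div hmn)⟩⟩
  have hS_sub : S ⊆ ⋃ n, B n := fun x hx => by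
    obtain ⟨δ, hδ, hδS⟩ := Metric.eventually_nhds_iff.mp (hS x hx)
    obtain ⟨n, hn⟩ := exists_nat_one_div_lt hδ
    refine Set.mem_iUnion.mpr ⟨n, hx, fun r hr => hδS ?_⟩
    rw [Real.dist_0_eq_abs, abs_of_nonneg hr.1]
    exact hr.2.trans_lt hn
  calc μ S ≤ μ (⋃ n, B n) := measure_mono hS_sub
    _ = ⨆ n, μ (B n) := hB_mono.measure_iUnion
    _ ≤ ε * μH[s] S := iSup_le fun n =>
        (measure_le_mul_hausdorffMeasure_of_measure_closedBall_le hε₀ hε Nat.one_div_pos_of_nat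
          fun x hx => hx.2).trans (by gcongr; exact fun x hx => hx.1)

theorem measure_eq_zero_of_hausdorffMeasure_ne_top {S : Set X} (hS : μH[s] S ≠ ∞)
    (h : ∀ x ∈ S, ∀ ε ≠ 0,
      ∀ᶠ r in 𝓝 0, μ (closedBall x r) ≤ ε * ENNReal.ofReal r ^ s) :
    μ S = 0 := by
  have hlim : Tendsto (fun n : ℕ => (n : ℝ≥0∞)⁻¹ * μH[s] S) atTop (𝓝 0) := by
    simpa using ENNReal.Tendsto.mul_const ENNReal.tendsto_inv_nat_nhds_zero (Or.inr hS)
  refine nonpos_iff_eq_zero.mp (ge_of_tendsto hlim ?_)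
  filter_upwards [eventually_ne_atTop 0] with n hn
  have hn₀ : (n : ℝ≥0∞)⁻¹ ≠ 0 := ENNReal.inv_ne_zero.mpr (ENNReal.natCast_ne_top n)
  exact measure_le_mul_hausdorffMeasure_of_eventually_measure_closedBall_le hn₀
    (ENNReal.inv_ne_top.mpr (Nat.cast_ne_zero.mpr hn)) fun x hx => h x hx _ hn₀

theorem eq_zero_of_lintegral_rieszPotential_ne_top [SecondCountableTopology X] [SFinite μ]
    (hs : 0 < s) {K : Set X} (hK : μH[s] K ≠ ∞) (hμK : μ Kᶜ = 0)
    (hμ : ∫⁻ x, rieszPotential μ s x ∂μ ≠ ∞) : μ = 0 := by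
  have hpot_meas : Measurable (rieszPotential μ s) :=
    (measurable_edist.pow_const _).lintegral_prod_right'
  set S := K ∩ {x | rieszPotential μ s x ≠ ∞}
  have hSc : μ Sᶜ = 0 := by
    rw [Set.compl_inter]
    refine measure_union_null hμK ?_
    simpa [ae_iff, Set.compl_ofPred] using ae_lt_top hpot_meas hμ
  have hS : μ S = 0 :=
    measure_eq_zero_of_hausdorffMeasure_ne_top
      (ne_top_of_le_ne_top hK (measure_mono Set.inter_subset_left)) fun x hx ε hε =>
        eventually_measure_closedBall_le_of_rieszPotential_ne_top hs hx.2 hε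
  rw [← Measure.measure_univ_eq_zero, ← Set.union_compl_self S]
  exact measure_union_null hS hSc

end Potential

theorem rieszEnergy_eq_lintegral_rieszPotential {d : ℕ} {s : ℝ} (hs : s ≠ 0)
    (μ : Measure (EuclideanSpace ℝ (Fin d))) :
    rieszEnergy d s μ = ∫⁻ x, rieszPotential μ s x ∂μ := by
  simp only [rieszEnergy, rieszKernel, if_neg hs, rieszPotential, edist_dist, dist_eq_norm]

theorem rieszCapacity_zero_of_hausdorffMeasure_lt_top_general (d : ℕ) (s : ℝ) (hs : 0 < s)
    (K : Set (EuclideanSpace ℝ (Fin d))) (h : μH[s] K < ∞) :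
    rieszCapacity d s K = 0 := by
  rw [rieszCapacity, ENNReal.inv_eq_zero]
  simp only [iInf_eq_top]
  intro μ hμ hμK
  rw [rieszEnergy_eq_lintegral_rieszPotential hs.ne']
  by_contra hE
  exact IsProbabilityMeasure.ne_zero μ (eq_zero_of_lintegral_rieszPotential_ne_top hs h.ne hμK hE)

/-- Frostman–Taylor, one direction: if `K ⊂ ℝ^d` is compact with finite `s`-dimensional
Hausdorff measure (`s > 0`), then its Riesz capacity of order `s` vanishes. -/
theorem rieszCapacity_zero_of_hausdorffMeasure_lt_top (d : ℕ) (s : ℝ) (hs : 0 < s)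
    (K : Set (EuclideanSpace ℝ (Fin d))) (hK : IsCompact K) (h : μH[s] K < ∞) :
    rieszCapacity d s K = 0 :=
  rieszCapacity_zero_of_hausdorffMeasure_lt_top_general d s hs K h
end
end

section
/- Let 0 < s and let K ⊂ ℝ^d be compact with cap_s(K) > 0. Then ℋ^{s'}(K) = +∞ for all 0 < s' < s, hence dim_H K ≥ s. -/
open MeasureTheory Filter
open scoped ENNReal NNReal

noncomputable section

lemma aux_hausdorff_ne_zero (d : ℕ) (s : ℝ) (hs : 0 < s)
    (K : Set (EuclideanSpace ℝ (Fin d))) (h : 0 < rieszCapacity d s K) :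
    μH[s] K ≠ 0 := by
  -- extract a probability measure with finite energy
  have hne : (⨅ (μ : Measure (EuclideanSpace ℝ (Fin d))) (_ : IsProbabilityMeasure μ)
      (_ : μ Kᶜ = 0), rieszEnergy d s μ) ≠ ⊤ := by
    rw [rieszCapacity, ENNReal.inv_pos] at h
    exact h
  have hlt := lt_top_iff_ne_top.mpr hne
  rw [iInf_lt_iff] at hlt
  obtain ⟨μ, hlt⟩ := hlt
  rw [iInf_lt_iff] at hlt
  obtain ⟨hP, hlt⟩ := hlt
  rw [iInf_lt_iff] at hlt
  obtain ⟨hKc, hE⟩ := hlt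
  -- the potential
  set u : EuclideanSpace ℝ (Fin d) → ℝ≥0∞ := fun x => ∫⁻ y, edist x y ^ (-s) ∂μ with hu
  have hker : ∀ x y : EuclideanSpace ℝ (Fin d),
      rieszKernel d s (x - y) = edist x y ^ (-s) := by
    intro x y
    rw [rieszKernel, if_neg hs.ne', ← dist_eq_norm, ← edist_dist]
  have humeas : Measurable u := by
    apply Measurable.lintegral_prod_right'
      (f := fun p : EuclideanSpace ℝ (Fin d) × EuclideanSpace ℝ (Fin d) => edist p.1 p.2 ^ (-s))
    exact measurable_edist.pow_const (-s)
  have hEu : ∫⁻ x, u x ∂μ ≠ ⊤ := by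
    have : rieszEnergy d s μ = ∫⁻ x, u x ∂μ := by
      rw [rieszEnergy]; simp only [hker, hu]
    rw [← this]; exact hE.ne
  have hae : ∀ᵐ x ∂μ, u x < ⊤ := ae_lt_top humeas hEu
  -- find a level set of the potential with positive measure
  have hex : ∃ n : ℕ, μ {x | u x ≤ n} ≠ 0 := by
    by_contra hc
    push_neg at hc
    have h1 : μ (⋃ n : ℕ, {x | u x ≤ n}) = 0 := measure_iUnion_null hc
    have h2 : {x | u x < ⊤} ⊆ ⋃ n : ℕ, {x | u x ≤ n} := by
      intro x hx
      obtain ⟨n, hn⟩ := ENNReal.exists_nat_gt (LT.lt.ne hx)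
      exact Set.mem_iUnion.mpr ⟨n, hn.le⟩
    have h3 : μ {x | u x < ⊤} = 0 := measure_mono_null h2 h1
    have h4 : μ {x | ¬ u x < ⊤} = 0 := by
      rw [ae_iff] at hae; exact hae
    have h5 : μ Set.univ = 0 := by
      have : (Set.univ : Set (EuclideanSpace ℝ (Fin d))) ⊆ {x | u x < ⊤} ∪ {x | ¬ u x < ⊤} := by
        intro x _; by_cases hx : u x < ⊤
        · exact Or.inl hx
        · exact Or.inr hx
      exact le_antisymm ((measure_mono this).trans
        ((measure_union_le _ _).trans (by rw [h3, h4, add_zero] ))) zero_le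
    simp [measure_univ] at h5
  obtain ⟨n, hn⟩ := hex
  set N : ℝ≥0∞ := (n : ℝ≥0∞) + 1 with hN
  have hN0 : N ≠ 0 := by simp [hN]
  have hNtop : N ≠ ⊤ := by simp [hN]
  set A : Set (EuclideanSpace ℝ (Fin d)) := {x | u x ≤ N} with hA
  have hAmeas : MeasurableSet A := humeas measurableSet_Iic
  have hA0 : μ A ≠ 0 := by
    have : {x | u x ≤ (n : ℝ≥0∞)} ⊆ A := fun x hx => show u x ≤ N from le_trans hx le_self_add
    exact fun h0 => hn (measure_mono_null this h0)
  -- key mass bound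
  have hball : ∀ x ∈ A, ∀ t : Set (EuclideanSpace ℝ (Fin d)), x ∈ t →
      EMetric.diam t ≤ 1 → μ t ≤ N * EMetric.diam t ^ s := by
    intro x hx t hxt hdiam
    set ρ := EMetric.diam t with hρ
    have hsub : t ⊆ EMetric.closedBall x ρ := fun y hy =>
      EMetric.mem_closedBall.mpr (EMetric.edist_le_diam_of_mem hy hxt)
    set B := EMetric.closedBall x ρ with hB
    have hBmeas : MeasurableSet B := measurable_edist_left measurableSet_Iic
    have hlow : ρ ^ (-s) * μ B ≤ N := by
      calc ρ ^ (-s) * μ B = ∫⁻ _ in B, ρ ^ (-s) ∂μ := (setLIntegral_const _ _).symm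
        _ ≤ ∫⁻ y in B, edist x y ^ (-s) ∂μ := by
            apply setLIntegral_mono (measurable_edist_right.pow_const (-s))
            intro y hy
            rw [ENNReal.rpow_neg, ENNReal.rpow_neg]
            apply ENNReal.inv_le_inv.mpr
            apply ENNReal.rpow_le_rpow _ hs.le
            rw [edist_comm]
            exact EMetric.mem_closedBall.mp hy
        _ ≤ ∫⁻ y, edist x y ^ (-s) ∂μ := setLIntegral_le_lintegral _ _
        _ ≤ N := hx
    have hfin : μ B ≤ N * ρ ^ s := by
      rcases eq_or_ne ρ 0 with h0 | h0
      · have htop : (⊤ : ℝ≥0∞) * μ B ≤ N := by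
          rw [h0, ENNReal.zero_rpow_of_neg (neg_lt_zero.mpr hs)] at hlow
          exact hlow
        have hB0 : μ B = 0 := by
          by_contra hB0
          rw [ENNReal.top_mul hB0] at htop
          exact hNtop (top_le_iff.mp htop)
        simp [hB0]
      · have hρtop : ρ ≠ ⊤ := (hdiam.trans_lt ENNReal.one_lt_top).ne
        calc μ B = (ρ ^ s * ρ ^ (-s)) * μ B := by
              rw [← ENNReal.rpow_add _ _ h0 hρtop]
              simp
          _ = ρ ^ s * (ρ ^ (-s) * μ B) := mul_assoc _ _ _
          _ ≤ ρ ^ s * N := mul_le_mul_right hlow _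
          _ = N * ρ ^ s := mul_comm _ _
    exact (measure_mono hsub).trans hfin
  -- mass distribution principle
  have hle : (N⁻¹ • μ.restrict A) ≤ μH[s] := by
    apply MeasureTheory.Measure.le_hausdorffMeasure s _ 1 one_pos
    intro t ht
    rw [Measure.smul_apply, Measure.restrict_apply' hAmeas, smul_eq_mul]
    rcases Set.eq_empty_or_nonempty (t ∩ A) with he | ⟨x, hxt, hxA⟩
    · simp [he]
    · have h1 : μ (t ∩ A) ≤ N * EMetric.diam t ^ s :=
        (measure_mono Set.inter_subset_left).trans (hball x hxA t hxt ht)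
      calc N⁻¹ * μ (t ∩ A) ≤ N⁻¹ * (N * EMetric.diam t ^ s) := mul_le_mul_right h1 _
        _ = (N⁻¹ * N) * EMetric.diam t ^ s := (mul_assoc _ _ _).symm
        _ = EMetric.diam t ^ s := by rw [ENNReal.inv_mul_cancel hN0 hNtop, one_mul]
  -- conclude
  have hKA : μ (K ∩ A) ≠ 0 := by
    intro h0
    apply hA0
    have : A ⊆ (K ∩ A) ∪ Kᶜ := by
      intro x hx; by_cases hxK : x ∈ K
      · exact Or.inl ⟨hxK, hx⟩
      · exact Or.inr hxK
    exact le_antisymm ((measure_mono this).trans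
      ((measure_union_le _ _).trans (by rw [h0, hKc, add_zero]))) zero_le
  have hfinal : N⁻¹ * μ (K ∩ A) ≤ μH[s] K := by
    have := hle K
    rwa [Measure.smul_apply, Measure.restrict_apply' hAmeas, smul_eq_mul] at this
  intro h0
  rw [h0, le_zero_iff] at hfinal
  rcases mul_eq_zero.mp hfinal with h1 | h1
  · exact hNtop (ENNReal.inv_eq_zero.mp h1)
  · exact hKA h1

/-- Frostman–Taylor, other direction: if `K ⊂ ℝ^d` is compact with positive Riesz capacity of
order `s > 0`, then `ℋ^{s'}(K) = ∞` for all `0 < s' < s`, and hence `dim_H K ≥ s`. -/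
theorem hausdorff_of_rieszCapacity_pos (d : ℕ) (s : ℝ) (hs : 0 < s)
    (K : Set (EuclideanSpace ℝ (Fin d))) (hK : IsCompact K) (h : 0 < rieszCapacity d s K) :
    (∀ s' : ℝ, 0 < s' → s' < s → μH[s'] K = ∞) ∧ ENNReal.ofReal s ≤ dimH K := by

  have hpos : μH[s] K ≠ 0 := aux_hausdorff_ne_zero d s hs K h
  have h1 : ∀ s' : ℝ, 0 < s' → s' < s → μH[s'] K = ∞ := fun s' _ hlt =>
    (MeasureTheory.Measure.hausdorffMeasure_zero_or_top hlt K).resolve_left hpos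
  refine ⟨h1, ?_⟩
  apply ENNReal.le_of_forall_nnreal_lt
  intro r hr
  rcases eq_or_ne r 0 with rfl | hr0
  · simp
  have hrs : (r : ℝ) < s := by
    have := (ENNReal.lt_ofReal_iff_toReal_lt ENNReal.coe_ne_top).mp hr
    simpa using this
  have hinf := h1 r (NNReal.coe_pos.mpr hr0.bot_lt) hrs
  exact le_dimH_of_hausdorffMeasure_eq_top hinf
end
end

section
/- Let u₁ : ℝ^d → [0,∞] be measurable and continuous away from 0, radially symmetric, with c₁|x|^{−d/2} ≤ u₁(x) ≤ c₂|x|^{−d/2} for small |x| and exponential decay at infinity. Then the convolution u = u₁ ∗ u₁ satisfies c₄(−log|x|) ≤ u(x) ≤ c₃(−log|x|) for all sufficiently small |x|, for some positive constants c₃, c₄. -/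
/-!
On the annulus `2‖x‖ < ‖y‖ ≤ R` one has `‖x‖ ≤ ‖x - y‖ ≤ 2‖y‖`, so the integrand
`u₁ (x - y) * u₁ y` is bounded below by a multiple of `‖y‖ ^ (-d)`, whose integral over the annulus
is `|S^{d-1}| * log (R / 2‖x‖)` in polar coordinates.

For the upper bound, the substitution `y ↦ x - y` reduces the integral to twice the integral over
`‖y‖ ≤ ‖x - y‖`, where `‖x - y‖ ≥ max ‖y‖ (‖x‖ / 2)`. There `u₁ (x - y) ≤ c₂ m ^ (-d/2) + C` with
`m` that maximum, and the three ranges `‖y‖ ≤ ‖x‖ / 2`, `‖x‖ / 2 < ‖y‖ < r` and `r ≤ ‖y‖`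
contribute `O(1)`, `O(-log ‖x‖)` and a multiple of `∫ u₁`, which is finite by the exponential
decay.
-/

open MeasureTheory Set Metric Module
open scoped ENNReal

theorem lintegral_Ioc_ofReal_rpow_sub_one {p : ℝ} (hp : 0 < p) {s : ℝ} (hs : 0 ≤ s) :
    ∫⁻ t in Ioc 0 s, ENNReal.ofReal (t ^ (p - 1)) = ENNReal.ofReal (s ^ p / p) := by
  have hp' : -1 < p - 1 := by linarith
  rw [← ofReal_integral_eq_lintegral_ofReal, ← intervalIntegral.integral_of_le hs,
    integral_rpow (.inl hp'), sub_add_cancel, Real.zero_rpow hp.ne', sub_zero]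
  · exact (intervalIntegrable_iff_integrableOn_Ioc_of_le hs).1
      (intervalIntegral.intervalIntegrable_rpow' hp')
  · filter_upwards [ae_restrict_mem measurableSet_Ioc] with t ht
    exact Real.rpow_nonneg ht.1.le _

theorem lintegral_Ioc_ofReal_inv {a b : ℝ} (ha : 0 < a) (hab : a ≤ b) :
    ∫⁻ t in Ioc a b, ENNReal.ofReal t⁻¹ = ENNReal.ofReal (Real.log b - Real.log a) := by
  rw [← ofReal_integral_eq_lintegral_ofReal, ← intervalIntegral.integral_of_le hab,
    integral_inv_of_pos ha (ha.trans_le hab), Real.log_div (ha.trans_le hab).ne' ha.ne']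
  · refine (intervalIntegrable_iff_integrableOn_Ioc_of_le hab).1
      (intervalIntegral.intervalIntegrable_inv (fun t ht ↦ ?_) continuousOn_id)
    rw [uIcc_of_le hab] at ht
    exact (ha.trans_le ht.1).ne'
  · filter_upwards [ae_restrict_mem measurableSet_Ioc] with t ht
    exact inv_nonneg.2 (ha.le.trans ht.1.le)

section RadialIntegrals

variable {E : Type*} [NormedAddCommGroup E] [NormedSpace ℝ E] [FiniteDimensional ℝ E]
  [MeasurableSpace E] [BorelSpace E] [Nontrivial E] (μ : Measure E) [μ.IsAddHaarMeasure]

theorem lintegral_fun_norm_addHaar {f : ℝ → ℝ≥0∞} (hf : Measurable f) :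
    ∫⁻ x, f ‖x‖ ∂μ =
      μ.toSphere univ * ∫⁻ t in Ioi 0, ENNReal.ofReal (t ^ (finrank ℝ E - 1)) * f t := by
  have hf' : Measurable fun p : sphere (0 : E) 1 × Ioi (0 : ℝ) ↦ f p.2 := by fun_prop
  calc ∫⁻ x, f ‖x‖ ∂μ = ∫⁻ x : ({0}ᶜ : Set E), f ‖(x : E)‖ ∂μ.comap (↑) := by
        rw [lintegral_subtype_comap (measurableSet_singleton _).compl fun x ↦ f ‖x‖,
          restrict_compl_singleton]
    _ = ∫⁻ p, f p.2 ∂(μ.toSphere.prod (.volumeIoiPow (finrank ℝ E - 1))) := by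
        rw [← μ.measurePreserving_homeomorphUnitSphereProd.lintegral_comp hf']
        simp [homeomorphUnitSphereProd]
    _ = _ := by
        simp only [lintegral_prod _ hf'.aemeasurable, lintegral_const]
        rw [mul_comm, Measure.volumeIoiPow,
          lintegral_withDensity_eq_lintegral_mul _ (by fun_prop) (by fun_prop),
          ← lintegral_subtype_comap measurableSet_Ioi]
        rfl

theorem toSphere_univ_toReal_pos : 0 < (μ.toSphere univ).toReal :=
  ENNReal.toReal_pos (Measure.measure_univ_ne_zero.2 μ.toSphere_ne_zero) (measure_ne_top _ _)

theorem integrable_exp_neg_mul_norm {c : ℝ} (hc : 0 < c) :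
    Integrable (fun x ↦ Real.exp (-c * ‖x‖)) μ := by
  refine (integrable_fun_norm_addHaar μ (f := fun t ↦ Real.exp (-c * t))).2 ?_
  have hs : (-1 : ℝ) < (finrank ℝ E - 1 : ℕ) := by
    linarith [Nat.cast_nonneg (α := ℝ) (finrank ℝ E - 1)]
  refine (integrableOn_rpow_mul_exp_neg_mul_rpow hs one_pos hc).congr_fun (fun t _ ↦ ?_)
    measurableSet_Ioi
  simp [Real.rpow_natCast]

variable {d : ℕ} (hdim : finrank ℝ E = d)
include hdim

theorem lintegral_indicator_Ioc_norm_rpow (q : ℝ) {a b : ℝ} (ha : 0 ≤ a) :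
    ∫⁻ x, (Ioc a b).indicator (fun t ↦ ENNReal.ofReal (t ^ q)) ‖x‖ ∂μ =
      μ.toSphere univ * ∫⁻ t in Ioc a b, ENNReal.ofReal (t ^ ((d : ℝ) - 1 + q)) := by
  rw [lintegral_fun_norm_addHaar μ (Measurable.indicator (by fun_prop) measurableSet_Ioc)]
  congr 1
  have hd : 1 ≤ d := hdim ▸ finrank_pos
  calc _ = ∫⁻ t in Ioi 0,
        (Ioc a b).indicator (fun t ↦ ENNReal.ofReal (t ^ ((d : ℝ) - 1 + q))) t := by
        refine setLIntegral_congr_fun measurableSet_Ioi fun t (ht : 0 < t) ↦ ?_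
        by_cases hab : t ∈ Ioc a b
        · rw [indicator_of_mem hab, indicator_of_mem hab, ← ENNReal.ofReal_mul (by positivity),
            hdim, ← Real.rpow_natCast, Nat.cast_sub hd, ← Real.rpow_add ht, Nat.cast_one]
        · rw [indicator_of_notMem hab, indicator_of_notMem hab, mul_zero]
    _ = _ := by
        rw [setLIntegral_indicator measurableSet_Ioc,
          inter_eq_self_of_subset_left (Ioc_subset_Ioi_self.trans (Ioi_subset_Ioi ha))]

theorem lintegral_indicator_Ioc_zero_norm_rpow_neg_half {s : ℝ} (hs : 0 ≤ s) :
    ∫⁻ x, (Ioc 0 s).indicator (fun t ↦ ENNReal.ofReal (t ^ (-(d : ℝ) / 2))) ‖x‖ ∂μ =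
      μ.toSphere univ * ENNReal.ofReal (s ^ ((d : ℝ) / 2) / ((d : ℝ) / 2)) := by
  have hd : (0 : ℝ) < d := Nat.cast_pos.2 (hdim ▸ finrank_pos)
  rw [lintegral_indicator_Ioc_norm_rpow μ hdim _ le_rfl,
    show (d : ℝ) - 1 + -(d : ℝ) / 2 = (d : ℝ) / 2 - 1 by ring,
    lintegral_Ioc_ofReal_rpow_sub_one (by positivity) hs]

theorem lintegral_indicator_Ioc_norm_rpow_neg_finrank {a b : ℝ} (ha : 0 < a) (hab : a ≤ b) :
    ∫⁻ x, (Ioc a b).indicator (fun t ↦ ENNReal.ofReal (t ^ (-(d : ℝ)))) ‖x‖ ∂μ =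
      μ.toSphere univ * ENNReal.ofReal (Real.log b - Real.log a) := by
  rw [lintegral_indicator_Ioc_norm_rpow μ hdim _ ha.le, show (d : ℝ) - 1 + -(d : ℝ) = -1 by ring]
  simp_rw [Real.rpow_neg_one]
  rw [lintegral_Ioc_ofReal_inv ha hab]

theorem lintegral_lt_top_of_le_rpow_of_le_exp {u : E → ℝ≥0∞} {c₂ r C c : ℝ} (hr : 0 ≤ r)
    (hc : 0 < c)
    (hnear : ∀ x, x ≠ 0 → ‖x‖ < r → u x ≤ ENNReal.ofReal (c₂ * ‖x‖ ^ (-(d : ℝ) / 2)))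
    (hfar : ∀ x, r ≤ ‖x‖ → u x ≤ ENNReal.ofReal (C * Real.exp (-c * ‖x‖))) :
    ∫⁻ x, u x ∂μ < ∞ := by
  set near : E → ℝ≥0∞ := fun x ↦ ENNReal.ofReal c₂ *
    (Ioc 0 r).indicator (fun t ↦ ENNReal.ofReal (t ^ (-(d : ℝ) / 2))) ‖x‖
  have hle : u ≤ᵐ[μ] fun x ↦ near x + ENNReal.ofReal (C * Real.exp (-c * ‖x‖)) := by
    filter_upwards [compl_mem_ae_iff.2 (measure_singleton (μ := μ) 0)] with x (hx : x ≠ 0)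
    rcases lt_or_ge ‖x‖ r with hxr | hxr
    · refine (hnear x hx hxr).trans (le_add_right ?_)
      dsimp only [near]
      rw [indicator_of_mem (show ‖x‖ ∈ Ioc 0 r from ⟨norm_pos_iff.2 hx, hxr.le⟩),
        ← ENNReal.ofReal_mul' (Real.rpow_nonneg (norm_nonneg x) _)]
    · exact (hfar x hxr).trans le_add_self
  have hnear_fin : ∫⁻ x, near x ∂μ < ∞ := by
    rw [lintegral_const_mul' _ _ ENNReal.ofReal_ne_top,
      lintegral_indicator_Ioc_zero_norm_rpow_neg_half μ hdim hr]
    exact ENNReal.mul_lt_top ENNReal.ofReal_lt_top (ENNReal.mul_lt_top (measure_lt_top _ _)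
      ENNReal.ofReal_lt_top)
  calc ∫⁻ x, u x ∂μ ≤ ∫⁻ x, near x + ENNReal.ofReal (C * Real.exp (-c * ‖x‖)) ∂μ :=
        lintegral_mono_ae hle
    _ = ∫⁻ x, near x ∂μ + ∫⁻ x, ENNReal.ofReal (C * Real.exp (-c * ‖x‖)) ∂μ :=
        lintegral_add_right _ (by fun_prop)
    _ < ∞ := ENNReal.add_lt_top.2 ⟨hnear_fin,
        ((integrable_exp_neg_mul_norm μ hc).const_mul C).lintegral_lt_top⟩

end RadialIntegrals

theorem lintegral_mul_comp_sub_le_two_mul {G : Type*} [NormedAddCommGroup G] [MeasurableSpace G]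
    [BorelSpace G] (μ : Measure G) [μ.IsAddLeftInvariant] [μ.IsNegInvariant] {f : G → ℝ≥0∞}
    (hf : Measurable f) (x : G) :
    ∫⁻ y, f (x - y) * f y ∂μ ≤
      2 * ∫⁻ y, {y | ‖y‖ ≤ ‖x - y‖}.indicator (fun y ↦ f (x - y) * f y) y ∂μ := by
  set S := {y | ‖y‖ ≤ ‖x - y‖}
  set Φ := S.indicator fun y ↦ f (x - y) * f y with hΦ_def
  have hΦ : Measurable Φ := ((hf.comp (continuous_sub_left x).measurable).mul hf).indicator
    (measurableSet_le measurable_norm (continuous_sub_left x).norm.measurable)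
  have hle : ∀ y, f (x - y) * f y ≤ Φ y + Φ (x - y) := fun y ↦ by
    by_cases hy : y ∈ S
    · rw [hΦ_def, indicator_of_mem hy]
      exact le_self_add
    · have hxy : x - y ∈ S := by
        show ‖x - y‖ ≤ ‖x - (x - y)‖
        rw [sub_sub_cancel]
        exact (not_le.1 hy).le
      rw [hΦ_def, indicator_of_mem hxy, sub_sub_cancel, mul_comm]
      exact le_add_self
  calc ∫⁻ y, f (x - y) * f y ∂μ ≤ ∫⁻ y, Φ y + Φ (x - y) ∂μ := lintegral_mono hle
    _ = 2 * ∫⁻ y, Φ y ∂μ := by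
      rw [lintegral_add_left hΦ, lintegral_sub_left_eq_self Φ x, two_mul]

section Pointwise

variable {E : Type*} [NormedAddCommGroup E] {d : ℕ} {u : E → ℝ≥0∞} {c₂ r C c : ℝ}
  (hc₂ : 0 ≤ c₂) (hC : 0 ≤ C) (hc : 0 ≤ c)
  (hnear : ∀ x, x ≠ 0 → ‖x‖ < r → u x ≤ ENNReal.ofReal (c₂ * ‖x‖ ^ (-(d : ℝ) / 2)))
  (hfar : ∀ x, r ≤ ‖x‖ → u x ≤ ENNReal.ofReal (C * Real.exp (-c * ‖x‖)))
include hc₂ hC hc hnear hfar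

theorem le_ofReal_rpow_add_ofReal_of_le_norm {m : ℝ} (hm : 0 < m) {z : E} (hmz : m ≤ ‖z‖) :
    u z ≤ ENNReal.ofReal (c₂ * m ^ (-(d : ℝ) / 2)) + ENNReal.ofReal C := by
  rcases lt_or_ge ‖z‖ r with hzr | hzr
  · refine (hnear z (norm_pos_iff.1 (hm.trans_le hmz)) hzr).trans (le_add_right ?_)
    have : -(d : ℝ) / 2 ≤ 0 := by have := d.cast_nonneg (α := ℝ); linarith
    exact ENNReal.ofReal_le_ofReal
      (mul_le_mul_of_nonneg_left (Real.rpow_le_rpow_of_nonpos hm hmz this) hc₂)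
  · refine (hfar z hzr).trans (le_add_left ?_)
    gcongr
    exact mul_le_of_le_one_right hC (Real.exp_le_one_iff.2 (by nlinarith [norm_nonneg z]))

theorem mul_le_of_norm_le_norm {s : ℝ} (hs : 0 < s) (hsr : s < r) {y z : E} (hy : y ≠ 0)
    (hyz : ‖y‖ ≤ ‖z‖) (hsz : s ≤ ‖z‖) :
    u z * u y ≤
      ENNReal.ofReal (c₂ ^ 2 * s ^ (-(d : ℝ) / 2)) *
          (Ioc 0 s).indicator (fun t ↦ ENNReal.ofReal (t ^ (-(d : ℝ) / 2))) ‖y‖ +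
        ENNReal.ofReal (c₂ ^ 2) *
          (Ioc s r).indicator (fun t ↦ ENNReal.ofReal (t ^ (-(d : ℝ)))) ‖y‖ +
        (ENNReal.ofReal (c₂ * r ^ (-(d : ℝ) / 2)) + ENNReal.ofReal C) * u y := by
  have hy0 : 0 < ‖y‖ := norm_pos_iff.2 hy
  have bound_z : ∀ m, 0 < m → m ≤ ‖z‖ →
      u z * u y ≤ ENNReal.ofReal (c₂ * m ^ (-(d : ℝ) / 2)) * u y + ENNReal.ofReal C * u y :=
    fun m hm hmz ↦ (add_mul _ _ (u y)) ▸ mul_le_mul_left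
      (le_ofReal_rpow_add_ofReal_of_le_norm hc₂ hC hc hnear hfar hm hmz) _
  have bound_y : ∀ m, 0 < m → ‖y‖ < r → ENNReal.ofReal (c₂ * m ^ (-(d : ℝ) / 2)) * u y ≤
      ENNReal.ofReal (c₂ ^ 2 * m ^ (-(d : ℝ) / 2)) * ENNReal.ofReal (‖y‖ ^ (-(d : ℝ) / 2)) :=
    fun m hm hyr ↦ by
      grw [hnear y hy hyr, ← ENNReal.ofReal_mul (by positivity),
        ← ENNReal.ofReal_mul (by positivity)]
      exact le_of_eq (congrArg _ (by ring))
  rcases le_or_gt ‖y‖ s with hys | hsy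
  · grw [bound_z s hs hsz, bound_y s hs (hys.trans_lt hsr),
      indicator_of_mem (show ‖y‖ ∈ Ioc 0 s from ⟨hy0, hys⟩)]
    gcongr
    · exact le_self_add
    · exact le_add_self
  rcases lt_or_ge ‖y‖ r with hyr | hry
  · grw [bound_z ‖y‖ hy0 hyz, bound_y ‖y‖ hy0 hyr,
      indicator_of_mem (show ‖y‖ ∈ Ioc s r from ⟨hsy, hyr.le⟩)]
    have hsq : ENNReal.ofReal (c₂ ^ 2 * ‖y‖ ^ (-(d : ℝ) / 2)) *
        ENNReal.ofReal (‖y‖ ^ (-(d : ℝ) / 2)) =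
        ENNReal.ofReal (c₂ ^ 2) * ENNReal.ofReal (‖y‖ ^ (-(d : ℝ))) := by
      rw [← ENNReal.ofReal_mul (by positivity), ← ENNReal.ofReal_mul (by positivity), mul_assoc,
        ← Real.rpow_add hy0, add_halves]
    rw [hsq]
    gcongr
    · exact le_add_self
    · exact le_add_self
  · grw [bound_z r (hs.trans hsr) (hry.trans hyz), ← add_mul]
    exact le_add_self

end Pointwise

section Convolution

variable {E : Type*} [NormedAddCommGroup E] [NormedSpace ℝ E] [FiniteDimensional ℝ E]
  [MeasurableSpace E] [BorelSpace E] [Nontrivial E] (μ : Measure E) [μ.IsAddHaarMeasure]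
  {d : ℕ} (hdim : finrank ℝ E = d) {u : E → ℝ≥0∞}
include hdim

theorem lintegral_mul_comp_sub_le (hmeas : Measurable u) {c₂ r C c : ℝ}
    (hc₂ : 0 ≤ c₂) (hC : 0 ≤ C) (hc : 0 ≤ c)
    (hnear : ∀ x, x ≠ 0 → ‖x‖ < r → u x ≤ ENNReal.ofReal (c₂ * ‖x‖ ^ (-(d : ℝ) / 2)))
    (hfar : ∀ x, r ≤ ‖x‖ → u x ≤ ENNReal.ofReal (C * Real.exp (-c * ‖x‖)))
    {x : E} (hx : x ≠ 0) (hxr : ‖x‖ / 2 < r) :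
    ∫⁻ y, u (x - y) * u y ∂μ ≤
      2 * (ENNReal.ofReal (c₂ ^ 2 * (2 / d)) * μ.toSphere univ +
        ENNReal.ofReal (c₂ ^ 2) * (μ.toSphere univ *
          ENNReal.ofReal (Real.log r - Real.log (‖x‖ / 2))) +
        (ENNReal.ofReal (c₂ * r ^ (-(d : ℝ) / 2)) + ENNReal.ofReal C) * ∫⁻ y, u y ∂μ) := by
  set s := ‖x‖ / 2 with hs_def
  have hs : 0 < s := half_pos (norm_pos_iff.2 hx)
  have hd : (0 : ℝ) < d := Nat.cast_pos.2 (hdim ▸ finrank_pos)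
  refine (lintegral_mul_comp_sub_le_two_mul μ hmeas x).trans (mul_le_mul_right ?_ 2)
  calc ∫⁻ y, {y | ‖y‖ ≤ ‖x - y‖}.indicator (fun y ↦ u (x - y) * u y) y ∂μ
      ≤ ∫⁻ y, ENNReal.ofReal (c₂ ^ 2 * s ^ (-(d : ℝ) / 2)) *
            (Ioc 0 s).indicator (fun t ↦ ENNReal.ofReal (t ^ (-(d : ℝ) / 2))) ‖y‖ +
          ENNReal.ofReal (c₂ ^ 2) *
            (Ioc s r).indicator (fun t ↦ ENNReal.ofReal (t ^ (-(d : ℝ)))) ‖y‖ +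
          (ENNReal.ofReal (c₂ * r ^ (-(d : ℝ) / 2)) + ENNReal.ofReal C) * u y ∂μ := by
        refine lintegral_mono_ae ?_
        filter_upwards [compl_mem_ae_iff.2 (measure_singleton (μ := μ) 0)] with y (hy : y ≠ 0)
        by_cases hyx : ‖y‖ ≤ ‖x - y‖
        · rw [indicator_of_mem (show y ∈ {y | ‖y‖ ≤ ‖x - y‖} from hyx)]
          refine mul_le_of_norm_le_norm hc₂ hC hc hnear hfar hs hxr hy hyx ?_
          linarith [norm_sub_norm_le x y]
        · rw [indicator_of_notMem (show y ∉ {y | ‖y‖ ≤ ‖x - y‖} from hyx)]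
          exact zero_le
    _ = _ := by
        have hball : ENNReal.ofReal (c₂ ^ 2 * s ^ (-(d : ℝ) / 2)) *
            (μ.toSphere univ * ENNReal.ofReal (s ^ ((d : ℝ) / 2) / ((d : ℝ) / 2))) =
            ENNReal.ofReal (c₂ ^ 2 * (2 / d)) * μ.toSphere univ := by
          rw [mul_left_comm, ← ENNReal.ofReal_mul (by positivity), mul_comm]
          congr 2
          rw [neg_div, Real.rpow_neg hs.le]
          field_simp
        have hmeas_Ioc : ∀ a b q : ℝ, Measurable fun y : E ↦
            (Ioc a b).indicator (fun t ↦ ENNReal.ofReal (t ^ q)) ‖y‖ := fun a b q ↦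
          (Measurable.indicator (by fun_prop) measurableSet_Ioc).comp measurable_norm
        rw [lintegral_add_right _ (hmeas.const_mul _),
          lintegral_add_left ((hmeas_Ioc _ _ _).const_mul _),
          lintegral_const_mul' _ _ ENNReal.ofReal_ne_top,
          lintegral_const_mul' _ _ ENNReal.ofReal_ne_top,
          lintegral_const_mul' _ _ (by finiteness),
          lintegral_indicator_Ioc_zero_norm_rpow_neg_half μ hdim hs.le,
          lintegral_indicator_Ioc_norm_rpow_neg_finrank μ hdim hs hxr.le, hball]

theorem ofReal_mul_log_le_lintegral_mul_comp_sub {c₁ r R : ℝ} (hc₁ : 0 ≤ c₁)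
    (hnear : ∀ x, x ≠ 0 → ‖x‖ < r → ENNReal.ofReal (c₁ * ‖x‖ ^ (-(d : ℝ) / 2)) ≤ u x)
    (hRr : 2 * R < r) {x : E} (hx : x ≠ 0) (hxR : 2 * ‖x‖ ≤ R) :
    ENNReal.ofReal (c₁ ^ 2 * 2 ^ (-(d : ℝ) / 2)) *
        (μ.toSphere univ * ENNReal.ofReal (Real.log R - Real.log (2 * ‖x‖))) ≤
      ∫⁻ y, u (x - y) * u y ∂μ := by
  have hx0 : 0 < ‖x‖ := norm_pos_iff.2 hx
  rw [← lintegral_indicator_Ioc_norm_rpow_neg_finrank μ hdim (by positivity) hxR,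
    ← lintegral_const_mul' _ _ ENNReal.ofReal_ne_top]
  refine lintegral_mono fun y ↦ ?_
  by_cases hy : ‖y‖ ∈ Ioc (2 * ‖x‖) R
  · rw [indicator_of_mem hy]
    obtain ⟨h2y, hyR⟩ := hy
    have hy0 : 0 < ‖y‖ := by linarith
    have hxy_lo : ‖x‖ ≤ ‖x - y‖ := by linarith [norm_sub_norm_le y x, norm_sub_rev y x]
    have hxy_hi : ‖x - y‖ ≤ 2 * ‖y‖ := by linarith [norm_sub_le x y]
    have hsq : ‖y‖ ^ (-(d : ℝ)) = ‖y‖ ^ (-(d : ℝ) / 2) * ‖y‖ ^ (-(d : ℝ) / 2) := by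
      rw [← Real.rpow_add hy0, add_halves]
    have hα : -(d : ℝ) / 2 ≤ 0 := by have := d.cast_nonneg (α := ℝ); linarith
    calc ENNReal.ofReal (c₁ ^ 2 * 2 ^ (-(d : ℝ) / 2)) * ENNReal.ofReal (‖y‖ ^ (-(d : ℝ)))
        = ENNReal.ofReal (c₁ * (2 * ‖y‖) ^ (-(d : ℝ) / 2)) *
            ENNReal.ofReal (c₁ * ‖y‖ ^ (-(d : ℝ) / 2)) := by
          rw [← ENNReal.ofReal_mul (by positivity), ← ENNReal.ofReal_mul (by positivity),
            Real.mul_rpow zero_le_two hy0.le, hsq]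
          ring_nf
      _ ≤ ENNReal.ofReal (c₁ * ‖x - y‖ ^ (-(d : ℝ) / 2)) *
            ENNReal.ofReal (c₁ * ‖y‖ ^ (-(d : ℝ) / 2)) := by
          refine mul_le_mul' (ENNReal.ofReal_le_ofReal (mul_le_mul_of_nonneg_left ?_ hc₁)) le_rfl
          exact Real.rpow_le_rpow_of_nonpos (by linarith) hxy_hi hα
      _ ≤ u (x - y) * u y :=
          mul_le_mul' (hnear _ (norm_pos_iff.1 (by linarith)) (by linarith))
            (hnear _ (norm_pos_iff.1 hy0) (by linarith))
  · rw [indicator_of_notMem hy, mul_zero]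
    exact zero_le

theorem exists_ofReal_neg_log_le_lintegral_mul_comp_sub {c₁ r : ℝ} (hc₁ : 0 < c₁) (hr : 0 < r)
    (hnear : ∀ x, x ≠ 0 → ‖x‖ < r → ENNReal.ofReal (c₁ * ‖x‖ ^ (-(d : ℝ) / 2)) ≤ u x) :
    ∃ c₄ > 0, ∃ ρ > 0, ∀ x : E, x ≠ 0 → ‖x‖ < ρ →
      ENNReal.ofReal (c₄ * (-Real.log ‖x‖)) ≤ ∫⁻ y, u (x - y) * u y ∂μ := by
  set R := min r 1 / 4 with hR_def
  have hR : 0 < R := by positivity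
  have hR1 : R / 2 ≤ 1 := by linarith [min_le_right r 1]
  set κ := (μ.toSphere univ).toReal
  have hκ : 0 < κ := toSphere_univ_toReal_pos μ
  refine ⟨c₁ ^ 2 * 2 ^ (-(d : ℝ) / 2) * κ / 2, by positivity, (R / 2) ^ 2,
    by positivity, fun x hx hxρ ↦ ?_⟩
  have hx0 : 0 < ‖x‖ := norm_pos_iff.2 hx
  have hxR : 2 * ‖x‖ ≤ R := by nlinarith
  refine le_trans ?_ (ofReal_mul_log_le_lintegral_mul_comp_sub μ hdim hc₁.le hnear
    (by linarith [min_le_left r 1]) hx hxR)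
  rw [← ENNReal.ofReal_toReal (measure_ne_top μ.toSphere univ), ← ENNReal.ofReal_mul hκ.le,
    ← ENNReal.ofReal_mul (by positivity)]
  refine ENNReal.ofReal_le_ofReal ?_
  have hlog := Real.log_le_log hx0 hxρ.le
  rw [Real.log_pow, Real.log_div hR.ne' two_ne_zero] at hlog
  rw [Real.log_mul two_ne_zero hx0.ne']
  have : 0 ≤ c₁ ^ 2 * 2 ^ (-(d : ℝ) / 2) * κ := by positivity
  push_cast at hlog
  nlinarith

theorem exists_lintegral_mul_comp_sub_le_ofReal_neg_log (hmeas : Measurable u) {c₂ r C c : ℝ}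
    (hc₂ : 0 ≤ c₂) (hr : 0 < r) (hC : 0 ≤ C) (hc : 0 < c)
    (hnear : ∀ x, x ≠ 0 → ‖x‖ < r → u x ≤ ENNReal.ofReal (c₂ * ‖x‖ ^ (-(d : ℝ) / 2)))
    (hfar : ∀ x, r ≤ ‖x‖ → u x ≤ ENNReal.ofReal (C * Real.exp (-c * ‖x‖))) :
    ∃ c₃ > 0, ∃ ρ > 0, ∀ x : E, x ≠ 0 → ‖x‖ < ρ →
      ∫⁻ y, u (x - y) * u y ∂μ ≤ ENNReal.ofReal (c₃ * (-Real.log ‖x‖)) := by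
  set κ := (μ.toSphere univ).toReal
  set I := (∫⁻ y, u y ∂μ).toReal
  set M := c₂ * r ^ (-(d : ℝ) / 2)
  set A := c₂ ^ 2 * (2 / d) * κ + c₂ ^ 2 * κ * (Real.log r + Real.log 2) + (M + C) * I
  have hκ : 0 ≤ κ := ENNReal.toReal_nonneg
  have hI : 0 ≤ I := ENNReal.toReal_nonneg
  refine ⟨2 * (|A| + c₂ ^ 2 * κ) + 1, by positivity, min (2 * r) (Real.exp (-1)), by positivity,
    fun x hx hxρ ↦ ?_⟩
  have hx0 : 0 < ‖x‖ := norm_pos_iff.2 hx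
  have hxr : ‖x‖ / 2 < r := by linarith [min_le_left (2 * r) (Real.exp (-1))]
  have hL : 1 ≤ -Real.log ‖x‖ := by
    have := Real.log_le_log hx0 (hxρ.le.trans (min_le_right _ _))
    rw [Real.log_exp] at this
    linarith
  have hℓ : 0 ≤ Real.log r - Real.log (‖x‖ / 2) :=
    sub_nonneg.2 (Real.log_le_log (by positivity) hxr.le)
  refine (lintegral_mul_comp_sub_le μ hdim hmeas hc₂ hC hc.le hnear hfar hx hxr).trans ?_
  rw [← ENNReal.ofReal_toReal (measure_ne_top μ.toSphere univ),
    ← ENNReal.ofReal_toReal (lintegral_lt_top_of_le_rpow_of_le_exp μ hdim hr.le hc hnear hfar).ne,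
    ← ENNReal.ofReal_mul (by positivity), ← ENNReal.ofReal_mul hκ,
    ← ENNReal.ofReal_mul (by positivity), ← ENNReal.ofReal_add (by positivity) hC,
    ← ENNReal.ofReal_mul (by positivity), ← ENNReal.ofReal_add (by positivity) (by positivity),
    ← ENNReal.ofReal_add (by positivity) (by positivity), ← ENNReal.ofReal_ofNat 2,
    ← ENNReal.ofReal_mul zero_le_two]
  refine ENNReal.ofReal_le_ofReal ?_
  rw [Real.log_div hx0.ne' two_ne_zero]
  have hA : A ≤ |A| * -Real.log ‖x‖ :=
    (le_abs_self A).trans (le_mul_of_one_le_right (abs_nonneg A) hL)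
  nlinarith [mul_nonneg (sq_nonneg c₂) hκ]

end Convolution

theorem log_kernel_estimate_general (d : ℕ) (hd : 0 < d)
    (u₁ : EuclideanSpace ℝ (Fin d) → ℝ≥0∞) (hmeas : Measurable u₁)
    (c₁ c₂ r : ℝ) (hc₁ : 0 < c₁) (hc₂ : 0 < c₂) (hr : 0 < r)
    (hnear : ∀ x : EuclideanSpace ℝ (Fin d), x ≠ 0 → ‖x‖ < r →
      ENNReal.ofReal (c₁ * ‖x‖ ^ (-(d : ℝ) / 2)) ≤ u₁ x ∧
      u₁ x ≤ ENNReal.ofReal (c₂ * ‖x‖ ^ (-(d : ℝ) / 2)))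
    (C c : ℝ) (hC : 0 < C) (hc : 0 < c)
    (hfar : ∀ x : EuclideanSpace ℝ (Fin d), r ≤ ‖x‖ →
      u₁ x ≤ ENNReal.ofReal (C * Real.exp (-c * ‖x‖))) :
    ∃ c₃ c₄ r₀ : ℝ, 0 < c₃ ∧ 0 < c₄ ∧ 0 < r₀ ∧ r₀ < 1 ∧
      ∀ x : EuclideanSpace ℝ (Fin d), x ≠ 0 → ‖x‖ < r₀ →
        ENNReal.ofReal (c₄ * (-Real.log ‖x‖)) ≤ (∫⁻ y, u₁ (x - y) * u₁ y) ∧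
        (∫⁻ y, u₁ (x - y) * u₁ y) ≤ ENNReal.ofReal (c₃ * (-Real.log ‖x‖)) := by
  have hdim : finrank ℝ (EuclideanSpace ℝ (Fin d)) = d := finrank_euclideanSpace_fin
  have : Nontrivial (EuclideanSpace ℝ (Fin d)) := nontrivial_of_finrank_pos (hdim ▸ hd)
  obtain ⟨c₄, hc₄, ρ₁, hρ₁, hlow⟩ := exists_ofReal_neg_log_le_lintegral_mul_comp_sub volume hdim
    hc₁ hr fun x hx hxr ↦ (hnear x hx hxr).1
  obtain ⟨c₃, hc₃, ρ₂, hρ₂, hup⟩ := exists_lintegral_mul_comp_sub_le_ofReal_neg_log volume hdim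
    hmeas hc₂.le hr hC.le hc (fun x hx hxr ↦ (hnear x hx hxr).2) hfar
  refine ⟨c₃, c₄, min (min ρ₁ ρ₂) (1 / 2), hc₃, hc₄, by positivity,
    (min_le_right _ _).trans_lt (by norm_num), fun x hx hxρ ↦ ⟨?_, ?_⟩⟩
  · exact hlow x hx (hxρ.trans_le ((min_le_left _ _).trans (min_le_left _ _)))
  · exact hup x hx (hxρ.trans_le ((min_le_left _ _).trans (min_le_right _ _)))

/-- Giraud-type kernel estimate: if `u₁ : ℝ^d → [0,∞]` is radially symmetric, continuous away
from `0`, comparable to `|x|^{-d/2}` near `0` and exponentially decaying at infinity, then the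
convolution `u = u₁ ∗ u₁` satisfies `c₄(−log|x|) ≤ u(x) ≤ c₃(−log|x|)` for small `|x|`. -/
theorem log_kernel_estimate (d : ℕ) (hd : 0 < d)
    (u₁ : EuclideanSpace ℝ (Fin d) → ℝ≥0∞) (hmeas : Measurable u₁)
    (hcont : ContinuousOn u₁ {x | x ≠ 0})
    (hrad : ∀ x y : EuclideanSpace ℝ (Fin d), ‖x‖ = ‖y‖ → u₁ x = u₁ y)
    (c₁ c₂ r : ℝ) (hc₁ : 0 < c₁) (hc₂ : 0 < c₂) (hr : 0 < r)
    (hnear : ∀ x : EuclideanSpace ℝ (Fin d), x ≠ 0 → ‖x‖ < r →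
      ENNReal.ofReal (c₁ * ‖x‖ ^ (-(d : ℝ) / 2)) ≤ u₁ x ∧
      u₁ x ≤ ENNReal.ofReal (c₂ * ‖x‖ ^ (-(d : ℝ) / 2)))
    (C c : ℝ) (hC : 0 < C) (hc : 0 < c)
    (hfar : ∀ x : EuclideanSpace ℝ (Fin d), r ≤ ‖x‖ →
      u₁ x ≤ ENNReal.ofReal (C * Real.exp (-c * ‖x‖))) :
    ∃ c₃ c₄ r₀ : ℝ, 0 < c₃ ∧ 0 < c₄ ∧ 0 < r₀ ∧ r₀ < 1 ∧
      ∀ x : EuclideanSpace ℝ (Fin d), x ≠ 0 → ‖x‖ < r₀ →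
        ENNReal.ofReal (c₄ * (-Real.log ‖x‖)) ≤ (∫⁻ y, u₁ (x - y) * u₁ y) ∧
        (∫⁻ y, u₁ (x - y) * u₁ y) ≤ ENNReal.ofReal (c₃ * (-Real.log ‖x‖)) :=
  log_kernel_estimate_general d hd u₁ hmeas c₁ c₂ r hc₁ hc₂ hr hnear C c hC hc hfar
end
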